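/- arXiv:1202.4343 — 5 statements merged into one kernel-verified Lean document; each statement's English description precedes it below -/
import Mathlib

section
/- Let i : ℝ → ℝ be twice continuously differentiable with d := inf_A i''(A) > -∞ and d < 0. If 0 < T < -1/d, then for every b ∈ ℝ the equation i'(A) = (b - A)/T has exactly one real solution A_b, and A_b is the unique critical point and a global minimum of E_b(A) = (b-A)^2/(2T) + i(A); in particular E_b''(A_b) = i''(A_b) + 1/T > 0. -/
/-!
Since `i'' ≥ d` and `1/T > -d`, the cost `E_b(A) = (b - A)²/(2T) + i(A)` satisfies
`E_b'' = i'' + 1/T ≥ d + 1/T > 0`. Hence `E_b'` is strictly increasing and, growing at least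
linearly, surjective: it has exactly one zero, which is the unique critical point of the convex
function `E_b` and therefore its global minimum. The zeros of `E_b'` are exactly the solutions
of `i'(A) = (b - A)/T`.
-/

open Set Filter

lemma surjective_of_le_deriv {g : ℝ → ℝ} (hg : Differentiable ℝ g) {c : ℝ} (hc : 0 < c)
    (hg' : ∀ x, c ≤ deriv g x) : Function.Surjective g := by
  have h_top : Tendsto g atTop atTop := by
    refine tendsto_atTop_mono' atTop ?_
      (tendsto_atTop_add_const_left _ (g 0) (tendsto_id.const_mul_atTop hc))
    filter_upwards [eventually_ge_atTop 0] with x hx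
    dsimp only [id]
    linarith [mul_sub_le_image_sub_of_le_deriv hg hg' hx]
  have h_bot : Tendsto g atBot atBot := by
    refine tendsto_atBot_mono' atBot ?_
      (tendsto_atBot_add_const_left _ (g 0) (tendsto_id.const_mul_atBot hc))
    filter_upwards [eventually_le_atBot 0] with x hx
    dsimp only [id]
    linarith [mul_sub_le_image_sub_of_le_deriv hg hg' hx]
  exact hg.continuous.surjective h_top h_bot

lemma isMinOn_univ_of_monotone_deriv {f : ℝ → ℝ} (hf : Differentiable ℝ f)
    (hf' : Monotone (deriv f)) {x : ℝ} (hx : deriv f x = 0) : IsMinOn f univ x :=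
  (hf'.convexOn_univ_of_deriv hf).isMinOn_of_rightDeriv_eq_zero (by simp)
    ((hf x).derivWithin (uniqueDiffWithinAt_Ioi x) ▸ hx)

lemma add_one_div_pos_of_lt_neg_one_div {d T : ℝ} (hT : 0 < T) (hTd : T < -1 / d) :
    0 < d + 1 / T := by
  rcases le_or_gt 0 d with hd | hd
  · positivity
  · have : -d < 1 / T := by
      rw [lt_div_iff_of_neg hd] at hTd
      rw [lt_div_iff₀ hT]
      linarith
    linarith

section Cost

variable {i : ℝ → ℝ} (T b : ℝ)

lemma hasDerivAt_cost (hi : Differentiable ℝ i) (B : ℝ) :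
    HasDerivAt (fun C : ℝ => (b - C) ^ 2 / (2 * T) + i C) (deriv i B - (b - B) / T) B := by
  refine ((((hasDerivAt_id B).const_sub b).pow 2).div_const (2 * T)).add (hi B).hasDerivAt
    |>.congr_deriv ?_
  simp only [id]
  ring

lemma hasDerivAt_deriv_cost (hi : Differentiable ℝ (deriv i)) (B : ℝ) :
    HasDerivAt (fun C : ℝ => deriv i C - (b - C) / T) (deriv (deriv i) B + 1 / T) B := by
  refine (hi B).hasDerivAt.sub (((hasDerivAt_id B).const_sub b).div_const T) |>.congr_deriv ?_
  ring

end Cost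

theorem stmt6_general (i : ℝ → ℝ) (hi : ContDiff ℝ 2 i)
    (d : ℝ) (hd : IsGLB (Set.range (deriv (deriv i))) d)
    (T : ℝ) (hT : 0 < T) (hTd : T < -1 / d) :
    ∀ b : ℝ,
      (∃! A : ℝ, deriv i A = (b - A) / T) ∧
      (∀ A : ℝ, deriv i A = (b - A) / T →
        (∀ B : ℝ, (b - A) ^ 2 / (2 * T) + i A ≤ (b - B) ^ 2 / (2 * T) + i B) ∧
        (∀ B : ℝ, deriv (fun C : ℝ => (b - C) ^ 2 / (2 * T) + i C) B = 0 → B = A) ∧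
        0 < deriv (deriv i) A + 1 / T) := by
  intro b
  have hi₁ : Differentiable ℝ i := hi.differentiable (by norm_num)
  have hi₂ : Differentiable ℝ (deriv i) :=
    (contDiff_succ_iff_deriv.mp hi).2.2.differentiable one_ne_zero
  have hd_le (C : ℝ) : d ≤ deriv (deriv i) C := hd.1 ⟨C, rfl⟩
  have hc : 0 < d + 1 / T := add_one_div_pos_of_lt_neg_one_div hT hTd
  set E := fun C : ℝ => (b - C) ^ 2 / (2 * T) + i C
  set E' := fun C : ℝ => deriv i C - (b - C) / T
  have hE (C : ℝ) : HasDerivAt E (E' C) C := hasDerivAt_cost T b hi₁ C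
  have hE' (C : ℝ) : HasDerivAt E' (deriv (deriv i) C + 1 / T) C :=
    hasDerivAt_deriv_cost T b hi₂ C
  have hderivE : deriv E = E' := funext fun C => (hE C).deriv
  have hE'_ge (C : ℝ) : d + 1 / T ≤ deriv E' C := (hE' C).deriv ▸ by linarith [hd_le C]
  have hE'_mono : StrictMono E' := strictMono_of_deriv_pos fun C => hc.trans_le (hE'_ge C)
  have hcrit (A : ℝ) : deriv i A = (b - A) / T ↔ E' A = 0 := sub_eq_zero.symm
  obtain ⟨A, hA⟩ := surjective_of_le_deriv (fun C => (hE' C).differentiableAt) hc hE'_ge 0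
  refine ⟨⟨A, (hcrit A).2 hA,
    fun B hB => hE'_mono.injective (((hcrit B).1 hB).trans hA.symm)⟩,
    fun A hA => ⟨fun B => ?_, fun B hB => ?_, by linarith [hd_le A]⟩⟩
  · exact isMinOn_univ_of_monotone_deriv (fun C => (hE C).differentiableAt)
      (hderivE ▸ hE'_mono.monotone) (hderivE ▸ (hcrit A).1 hA) (mem_univ B)
  · exact hE'_mono.injective ((hderivE ▸ hB).trans ((hcrit A).1 hA).symm)

/-- Short-time Gibbsianness: if `i` is C² with `d := inf i'' > -∞`, `d < 0`, and
`0 < T < -1/d`, then for every `b` the equation `i'(A) = (b-A)/T` has exactly one real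
solution `A_b`; `A_b` is the unique critical point and a global minimum of
`E_b(A) = (b-A)²/(2T) + i(A)`, and `E_b''(A_b) = i''(A_b) + 1/T > 0`. -/
theorem stmt6 (i : ℝ → ℝ) (hi : ContDiff ℝ 2 i)
    (d : ℝ) (hd : IsGLB (Set.range (deriv (deriv i))) d) (hd0 : d < 0)
    (T : ℝ) (hT : 0 < T) (hTd : T < -1 / d) :
    ∀ b : ℝ,
      (∃! A : ℝ, deriv i A = (b - A) / T) ∧
      (∀ A : ℝ, deriv i A = (b - A) / T →
        (∀ B : ℝ, (b - A) ^ 2 / (2 * T) + i A ≤ (b - B) ^ 2 / (2 * T) + i B) ∧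
        (∀ B : ℝ, deriv (fun C : ℝ => (b - C) ^ 2 / (2 * T) + i C) B = 0 → B = A) ∧
        0 < deriv (deriv i) A + 1 / T) :=
  stmt6_general i hi d hd T hT hTd
end

section
/- Let a > 0, V ∈ ℝ, T > 0, and define E(A) = (1/2)((VT - A)/T - V)^2 · T + (A^2 - a^2)^2 evaluated for trajectories ending at b = VT. Then E(A) = A^2/(2T) + (A^2 - a^2)^2, which is identical to the zero-drift cost to end at 0; in particular, for T > 1/(4a^2), E has exactly two global minimizers ±√(a^2 - 1/(4T)). -/
/-! Along the straight path from `A` to `VT` the velocity is `V - A/T`, so the drift cancels and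
the cost `A²/(2T) + (A² - a²)²` is the zero-drift one. Completing the square in `A²` writes it as
`(A² - c)² + const` with `c = a² - 1/(4T)`, which is positive exactly when `T > 1/(4a²)`, and then
the minimizers are the two solutions of `A² = c`. -/

theorem drift_path_cost_eq {T : ℝ} (hT : T ≠ 0) (V A : ℝ) :
    (1 / 2) * ((V * T - A) / T - V) ^ 2 * T = A ^ 2 / (2 * T) := by
  field_simp
  ring

theorem zero_drift_cost_eq_sq_add (a T A : ℝ) :
    A ^ 2 / (2 * T) + (A ^ 2 - a ^ 2) ^ 2 =
      (A ^ 2 - (a ^ 2 - 1 / (4 * T))) ^ 2 + (a ^ 4 - (a ^ 2 - 1 / (4 * T)) ^ 2) := by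
  ring

theorem setOf_forall_sq_sub_sq_add_le {c : ℝ} (hc : 0 ≤ c) (d : ℝ) :
    {x : ℝ | ∀ y, (x ^ 2 - c) ^ 2 + d ≤ (y ^ 2 - c) ^ 2 + d} = {√c, -√c} := by
  have hsqrt : √c ^ 2 = c := Real.sq_sqrt hc
  ext x
  simp only [Set.mem_ofPred_eq, Set.mem_insert_iff, Set.mem_singleton_iff]
  rw [← sq_eq_sq_iff_eq_or_eq_neg, hsqrt]
  constructor
  · intro hmin
    have hle := hmin √c
    rw [hsqrt, sub_self] at hle
    nlinarith [sq_nonneg (x ^ 2 - c)]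
  · intro hx y
    rw [hx, sub_self]
    nlinarith [sq_nonneg (y ^ 2 - c)]

/-- For Brownian motion with constant drift `V`, conditioning at `b = VT`: the cost
`E(A) = (1/2)((VT - A)/T - V)² T + (A²-a²)²` equals `A²/(2T) + (A²-a²)²`, the zero-drift
cost to end at 0; for `T > 1/(4a²)` its global minimizers are exactly `±√(a² - 1/(4T))`. -/
theorem stmt8 (a V T : ℝ) (ha : 0 < a) (hT : 0 < T)
    (E : ℝ → ℝ)
    (hE : ∀ A, E A = (1 / 2) * ((V * T - A) / T - V) ^ 2 * T + (A ^ 2 - a ^ 2) ^ 2) :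
    (∀ A : ℝ, E A = A ^ 2 / (2 * T) + (A ^ 2 - a ^ 2) ^ 2) ∧
    (1 / (4 * a ^ 2) < T →
      {A : ℝ | ∀ B : ℝ, E A ≤ E B} =
        {Real.sqrt (a ^ 2 - 1 / (4 * T)), -Real.sqrt (a ^ 2 - 1 / (4 * T))}) := by
  have hE₀ : ∀ A, E A = A ^ 2 / (2 * T) + (A ^ 2 - a ^ 2) ^ 2 := fun A => by
    rw [hE, drift_path_cost_eq hT.ne']
  refine ⟨hE₀, fun hTa => ?_⟩
  have hc : 0 ≤ a ^ 2 - 1 / (4 * T) := by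
    rw [div_lt_iff₀ (by positivity)] at hTa
    rw [sub_nonneg, div_le_iff₀ (by positivity)]
    linarith
  simp_rw [hE₀, zero_drift_cost_eq_sq_add]
  exact setOf_forall_sq_sub_sq_add_le hc _
end

section
/- Let κ > 0, T > 0, b ∈ ℝ, and let γ_t = A e^{κt} + B e^{-κt} satisfy γ_T = b and γ_0 = x₀. Then (1/2)∫₀^T (γ̇_s + κγ_s)^2 ds = κ(x₀ - b e^{κT})^2 / (e^{2κT} - 1). -/
/-!
Along `γ_t = A e^{κt} + B e^{-κt}` the decaying mode is annihilated by `d/dt + κ`, so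
`γ̇ + κγ = 2κA e^{κt}` and the cost is `κA²(e^{2κT} - 1)`. The boundary values give
`x₀ - b e^{κT} = -A(e^{2κT} - 1)`, and the cancellation `y²/y = y` with `y = e^{2κT} - 1`
turns the cost into the stated formula; it holds at `y = 0` too, where `0/0 = 0`.
-/

open Real

lemma hasDerivAt_mul_exp_add_mul_exp_neg (κ A B t : ℝ) :
    HasDerivAt (fun s => A * exp (κ * s) + B * exp (-(κ * s)))
      (κ * (A * exp (κ * t) - B * exp (-(κ * t)))) t := by
  have hexp : ∀ c : ℝ, HasDerivAt (fun s => exp (c * s)) (c * exp (c * t)) t := fun c => by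
    simpa [mul_comm] using ((hasDerivAt_id t).const_mul c).exp
  have := ((hexp κ).const_mul A).add ((hexp (-κ)).const_mul B)
  simp only [neg_mul] at this
  exact this.congr_deriv (by ring)

lemma integral_sq_two_mul_mul_exp (κ A T : ℝ) :
    ∫ t in (0:ℝ)..T, (2 * κ * A * exp (κ * t)) ^ 2 =
      2 * κ * A ^ 2 * (exp (2 * κ * T) - 1) := by
  have hF : ∀ t, HasDerivAt (fun s => 2 * κ * A ^ 2 * exp (2 * κ * s))
      ((2 * κ * A * exp (κ * t)) ^ 2) t := fun t => by
    refine (((hasDerivAt_id t).const_mul (2 * κ)).exp.const_mul (2 * κ * A ^ 2)).congr_deriv ?_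
    rw [id, mul_pow, sq (exp _), ← exp_add]
    ring_nf
  rw [intervalIntegral.integral_eq_sub_of_hasDerivAt (fun t _ => hF t)
    (by apply Continuous.intervalIntegrable; fun_prop)]
  simp only [mul_zero, exp_zero]
  ring

theorem stmt10_general (κ T b x₀ A B : ℝ)
    (γ : ℝ → ℝ)
    (hγ : ∀ t : ℝ, γ t = A * Real.exp (κ * t) + B * Real.exp (-(κ * t)))
    (hb : γ T = b) (h0 : γ 0 = x₀) :
    (1 / 2) * ∫ t in (0:ℝ)..T, (deriv γ t + κ * γ t) ^ 2 =
      κ * (x₀ - b * Real.exp (κ * T)) ^ 2 / (Real.exp (2 * κ * T) - 1) := by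
  have hdrift : ∀ t, deriv γ t + κ * γ t = 2 * κ * A * exp (κ * t) := fun t => by
    rw [funext hγ, (hasDerivAt_mul_exp_add_mul_exp_neg κ A B t).deriv]
    ring
  have hboundary : x₀ - b * exp (κ * T) = -(A * (exp (2 * κ * T) - 1)) := by
    rw [← h0, ← hb, hγ, hγ, mul_zero, neg_zero, exp_zero, exp_neg,
      show 2 * κ * T = κ * T + κ * T by ring, exp_add]
    field_simp
    ring
  simp_rw [hdrift, integral_sq_two_mul_mul_exp, hboundary, neg_sq, mul_pow]
  rw [sq (exp _ - 1), mul_div_assoc, mul_div_assoc, mul_self_div_self]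
  ring

/-- Explicit path cost of the Ornstein–Uhlenbeck extremal `γ_t = A e^{κt} + B e^{-κt}`
from `x₀` at time 0 to `b` at time `T`:
`(1/2)∫₀ᵀ (γ̇ + κγ)² ds = κ(x₀ - b e^{κT})²/(e^{2κT} - 1)`. -/
theorem stmt10 (κ T b x₀ A B : ℝ) (hκ : 0 < κ) (hT : 0 < T)
    (γ : ℝ → ℝ)
    (hγ : ∀ t : ℝ, γ t = A * Real.exp (κ * t) + B * Real.exp (-(κ * t)))
    (hb : γ T = b) (h0 : γ 0 = x₀) :
    (1 / 2) * ∫ t in (0:ℝ)..T, (deriv γ t + κ * γ t) ^ 2 =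
      κ * (x₀ - b * Real.exp (κ * T)) ^ 2 / (Real.exp (2 * κ * T) - 1) :=
  stmt10_general κ T b x₀ A B γ hγ hb h0
end

section
/- Let a, κ > 0 and define E_T(x₀) = (x₀^2 - a^2)^2 + κ x₀^2/(e^{2κT} - 1). If T ≤ T_c := -(1/(2κ)) log(2a²/(2a² + κ)), then x₀ = 0 is the unique global minimizer of E_T; if T > T_c, then E_T has exactly two global minimizers ±√(a² - κ/(2(e^{2κT} - 1))), and in particular E_T(0) > inf E_T. -/
/-!
Writing `c = κ / (e^{2κT} - 1)`, completing the square in `u = x²` gives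
`E_T(x) = (x² - m)² + (a⁴ - m²)` with vertex `m = a² - c / 2`. If `m ≤ 0` the square is
minimized on `u ≥ 0` only at `u = 0`; if `m > 0` it vanishes exactly at `x = ±√m`.
Unwinding `T_c`, the condition `m ≤ 0` is precisely `T ≤ T_c`.
-/

open Real

lemma sq_lt_sq_sub_of_nonpos {m x : ℝ} (hm : m ≤ 0) (hx : x ≠ 0) : m ^ 2 < (x ^ 2 - m) ^ 2 := by
  have hx2 : 0 < x ^ 2 := by positivity
  nlinarith

lemma setOf_forall_sq_sub_le_eq {m : ℝ} (hm : 0 ≤ m) :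
    {x : ℝ | ∀ y : ℝ, (x ^ 2 - m) ^ 2 ≤ (y ^ 2 - m) ^ 2} = {√m, -√m} := by
  ext x
  have hsqrt : √m ^ 2 = m := sq_sqrt hm
  simp only [Set.mem_ofPred_eq, Set.mem_insert_iff, Set.mem_singleton_iff,
    ← sq_eq_sq_iff_eq_or_eq_neg, hsqrt]
  constructor
  · intro h
    have := h √m
    rw [hsqrt, sub_self, zero_pow two_ne_zero] at this
    exact sub_eq_zero.1 (pow_eq_zero_iff two_ne_zero |>.1 (le_antisymm this (sq_nonneg _)))
  · intro hx y
    rw [hx, sub_self, zero_pow two_ne_zero]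
    exact sq_nonneg _

lemma le_neg_log_div_iff {A κ T : ℝ} (hA : 0 < A) (hκ : 0 < κ) :
    T ≤ -(1 / (2 * κ)) * log (A / (A + κ)) ↔ A * (exp (2 * κ * T) - 1) ≤ κ := by
  have hlog : -(1 / (2 * κ)) * log (A / (A + κ)) = log ((A + κ) / A) / (2 * κ) := by
    rw [← inv_div A (A + κ), log_inv]; ring
  rw [hlog, le_div_iff₀ (by positivity), mul_comm, le_log_iff_exp_le (by positivity),
    le_div_iff₀ hA]
  constructor <;> intro h <;> linarith

/-- For the small-noise OU process with initial rate function `(x²-a²)²`, the total cost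
`E_T(x₀) = (x₀²-a²)² + κx₀²/(e^{2κT}-1)` has `0` as unique global minimizer iff
`T ≤ T_c = -(1/(2κ)) log(2a²/(2a²+κ))`; for `T > T_c` the global minimizers are exactly
`±√(a² - κ/(2(e^{2κT}-1)))`, and in particular `E_T(0) > inf E_T`. -/
theorem stmt11 (a κ T : ℝ) (ha : 0 < a) (hκ : 0 < κ) (hT : 0 < T)
    (Tc : ℝ) (hTc : Tc = -(1 / (2 * κ)) * Real.log (2 * a ^ 2 / (2 * a ^ 2 + κ)))
    (E : ℝ → ℝ)
    (hE : ∀ x, E x = (x ^ 2 - a ^ 2) ^ 2 + κ * x ^ 2 / (Real.exp (2 * κ * T) - 1)) :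
    (T ≤ Tc → (∀ x : ℝ, E 0 ≤ E x) ∧ (∀ x : ℝ, x ≠ 0 → E 0 < E x)) ∧
    (Tc < T →
      {x : ℝ | ∀ y : ℝ, E x ≤ E y} =
        {Real.sqrt (a ^ 2 - κ / (2 * (Real.exp (2 * κ * T) - 1))),
         -Real.sqrt (a ^ 2 - κ / (2 * (Real.exp (2 * κ * T) - 1)))} ∧
      ∃ y : ℝ, E y < E 0) := by
  set D := exp (2 * κ * T) - 1
  have hD : 0 < D := sub_pos.2 (one_lt_exp_iff.2 (by positivity))
  set m := a ^ 2 - κ / (2 * D) with hm_def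
  have hEm : ∀ x, E x = (x ^ 2 - m) ^ 2 + (a ^ 4 - m ^ 2) := fun x => by
    rw [hE, hm_def]; field_simp; ring
  have hTc_iff : T ≤ Tc ↔ m ≤ 0 := by
    rw [hTc, le_neg_log_div_iff (by positivity) hκ, sub_nonpos, le_div_iff₀ (by positivity)]
    constructor <;> intro h <;> linarith
  simp only [hEm, add_le_add_iff_right, add_lt_add_iff_right]
  refine ⟨fun hTle => ?_, fun hTgt => ?_⟩
  · have hm := hTc_iff.1 hTle
    have hlt : ∀ x : ℝ, x ≠ 0 → (0 ^ 2 - m) ^ 2 < (x ^ 2 - m) ^ 2 := fun x hx => by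
      simpa using sq_lt_sq_sub_of_nonpos hm hx
    refine ⟨fun x => ?_, hlt⟩
    rcases eq_or_ne x 0 with rfl | hx
    exacts [le_rfl, (hlt x hx).le]
  · have hm : 0 < m := lt_of_not_ge (mt hTc_iff.2 hTgt.not_ge)
    refine ⟨setOf_forall_sq_sub_le_eq hm.le, √m, ?_⟩
    rw [sq_sqrt hm.le]
    simpa using pow_pos hm 2
end

section
/- Let κ > 0, E ∈ ℝ, T > 0. The optimal trajectory for the Ornstein–Uhlenbeck process with constant field, dX = (-κX + E)dt + n^{-1/2}dB, starting at γ₀ and ending at γ_T = b, is γ_t = (b - E/κ)·sinh(κt)/sinh(κT) + (γ₀ - E/κ)·sinh(κ(T-t))/sinh(κT) + E/κ, and its path cost (1/2)∫₀^T(γ̇_s + κγ_s - E)² ds equals κ(γ₀ - (b - E/κ)e^{κT} - E/κ)²/(e^{2κT} - 1). -/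
/-!
Along the sinh path the residual `γ̇ + κγ - E` is a pure exponential `c e^{κt}`. A competitor `η`
with the same endpoints has residual `c e^{κt} + (δ̇ + κδ)`, `δ = η - γ`, and the cross term
`∫ e^{κt}(δ̇ + κδ) = [e^{κt}δ]₀ᵀ` vanishes because `δ(0) = δ(T) = 0`. Hence the cost of `η` exceeds
that of `γ` by `(1/2)∫(δ̇ + κδ)² ≥ 0`, and the cost of `γ` is `(c²/2)∫₀ᵀ e^{2κt}`.
-/

open Real intervalIntegral

section PathCost

variable {κ E a b : ℝ}

theorem integral_exp_mul_deriv_add_mul_eq_zero {δ δ' : ℝ → ℝ}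
    (hδ : ∀ t ∈ Set.uIcc a b, HasDerivAt δ (δ' t) t)
    (hint : IntervalIntegrable (fun t => exp (κ * t) * (δ' t + κ * δ t)) MeasureTheory.volume a b)
    (ha : δ a = 0) (hb : δ b = 0) :
    ∫ t in a..b, exp (κ * t) * (δ' t + κ * δ t) = 0 := by
  have hF : ∀ t ∈ Set.uIcc a b,
      HasDerivAt (fun t => exp (κ * t) * δ t) (exp (κ * t) * (δ' t + κ * δ t)) t := by
    intro t ht
    have he : HasDerivAt (fun t => exp (κ * t)) (exp (κ * t) * κ) t := by
      simpa using ((hasDerivAt_id t).const_mul κ).exp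
    exact (he.mul (hδ t ht)).congr_deriv (by ring)
  rw [integral_eq_sub_of_hasDerivAt hF hint, ha, hb]
  simp

theorem integral_sq_const_mul_exp (hκ : κ ≠ 0) (c : ℝ) :
    ∫ t in a..b, (c * exp (κ * t)) ^ 2 = c ^ 2 * (exp (2 * κ * b) - exp (2 * κ * a)) / (2 * κ) := by
  have h2κ : 2 * κ ≠ 0 := mul_ne_zero two_ne_zero hκ
  have hsq : ∀ t, (c * exp (κ * t)) ^ 2 = c ^ 2 * exp (2 * κ * t) := fun t => by
    rw [mul_pow, sq (exp _), ← exp_add]; ring_nf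
  simp_rw [hsq, integral_const_mul, integral_comp_mul_left (fun t => exp t) h2κ, integral_exp,
    smul_eq_mul]
  field_simp

theorem integral_residual_sq_le {γ η : ℝ → ℝ} {c : ℝ} (hab : a ≤ b)
    (hγ : Differentiable ℝ γ) (hres : ∀ t, deriv γ t + κ * γ t - E = c * exp (κ * t))
    (hη : ContDiff ℝ 1 η) (ha : η a = γ a) (hb : η b = γ b) :
    ∫ t in a..b, (deriv γ t + κ * γ t - E) ^ 2 ≤ ∫ t in a..b, (deriv η t + κ * η t - E) ^ 2 := by
  set δ := fun t => η t - γ t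
  set δ' := fun t => deriv η t - deriv γ t
  have hexp : Continuous fun t => exp (κ * t) := by fun_prop
  have hγc : Continuous (deriv γ) := by
    have : deriv γ = fun t => c * exp (κ * t) + E - κ * γ t := funext fun t => by
      linarith [hres t]
    rw [this]
    exact (continuous_const.mul hexp).add continuous_const |>.sub
      (continuous_const.mul hγ.continuous)
  have hh : Continuous fun t => δ' t + κ * δ t :=
    ((hη.continuous_deriv le_rfl).sub hγc).add (continuous_const.mul (hη.continuous.sub hγ.continuous))
  have hcross : ∫ t in a..b, exp (κ * t) * (δ' t + κ * δ t) = 0 :=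
    integral_exp_mul_deriv_add_mul_eq_zero
      (fun t _ => ((hη.differentiable one_ne_zero t).hasDerivAt).sub (hγ t).hasDerivAt)
      ((hexp.mul hh).intervalIntegrable _ _) (by simp [δ, ha]) (by simp [δ, hb])
  have hpt : ∀ t, (deriv η t + κ * η t - E) ^ 2 = (deriv γ t + κ * γ t - E) ^ 2 +
      (2 * c * (exp (κ * t) * (δ' t + κ * δ t)) + (δ' t + κ * δ t) ^ 2) := fun t => by
    have : deriv η t + κ * η t - E = c * exp (κ * t) + (δ' t + κ * δ t) := by
      simp only [δ, δ']; linarith [hres t]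
    rw [this, hres t]; ring
  have hγint : Continuous fun t => (deriv γ t + κ * γ t - E) ^ 2 := by
    simp_rw [hres]; exact (continuous_const.mul hexp).pow 2
  rw [integral_congr fun t _ => hpt t, integral_add (hγint.intervalIntegrable _ _),
    integral_add, integral_const_mul, hcross, mul_zero, zero_add, le_add_iff_nonneg_right]
  · exact integral_nonneg hab fun t _ => sq_nonneg _
  · exact (continuous_const.mul (hexp.mul hh)).intervalIntegrable _ _
  · exact (hh.pow 2).intervalIntegrable _ _
  · exact ((continuous_const.mul (hexp.mul hh)).add (hh.pow 2)).intervalIntegrable _ _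

end PathCost

noncomputable def ouOptimalPath (κ E T γ₀ b : ℝ) (t : ℝ) : ℝ :=
  (b - E / κ) * sinh (κ * t) / sinh (κ * T) +
    (γ₀ - E / κ) * sinh (κ * (T - t)) / sinh (κ * T) + E / κ

section OptimalPath

variable {κ E T γ₀ b : ℝ}

theorem ouOptimalPath_zero (hS : sinh (κ * T) ≠ 0) : ouOptimalPath κ E T γ₀ b 0 = γ₀ := by
  simp [ouOptimalPath, hS]

theorem ouOptimalPath_self (hS : sinh (κ * T) ≠ 0) : ouOptimalPath κ E T γ₀ b T = b := by
  simp [ouOptimalPath, hS]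

theorem hasDerivAt_ouOptimalPath (t : ℝ) :
    HasDerivAt (ouOptimalPath κ E T γ₀ b)
      ((b - E / κ) * (cosh (κ * t) * κ) / sinh (κ * T) -
        (γ₀ - E / κ) * (cosh (κ * (T - t)) * κ) / sinh (κ * T)) t := by
  have h₁ : HasDerivAt (fun t => κ * t) κ t := by simpa using (hasDerivAt_id t).const_mul κ
  have h₂ : HasDerivAt (fun t => κ * (T - t)) (-κ) t := by
    simpa using ((hasDerivAt_id t).const_sub T).const_mul κ
  have := (((h₁.sinh.const_mul (b - E / κ)).div_const (sinh (κ * T))).add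
    ((h₂.sinh.const_mul (γ₀ - E / κ)).div_const (sinh (κ * T)))).add_const (E / κ)
  exact this.congr_deriv (by ring)

theorem ouOptimalPath_residual (hκ : κ ≠ 0) (t : ℝ) :
    deriv (ouOptimalPath κ E T γ₀ b) t + κ * ouOptimalPath κ E T γ₀ b t - E =
      κ * ((b - E / κ) - (γ₀ - E / κ) * exp (-(κ * T))) / sinh (κ * T) * exp (κ * t) := by
  have hexp : exp (-(κ * (T - t))) = exp (-(κ * T)) * exp (κ * t) := by
    rw [← exp_add]; ring_nf
  rw [(hasDerivAt_ouOptimalPath t).deriv, ouOptimalPath]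
  have h₁ := cosh_add_sinh (κ * t)
  have h₂ := sinh_sub_cosh (κ * (T - t))
  rw [hexp] at h₂
  have hE : κ * (E / κ) = E := mul_div_cancel₀ E hκ
  linear_combination κ * (b - E / κ) / sinh (κ * T) * h₁ +
    κ * (γ₀ - E / κ) / sinh (κ * T) * h₂ + hE

theorem ouOptimalPath_cost (hκ : κ ≠ 0) (hT : T ≠ 0) :
    (1 / 2) * ∫ t in (0 : ℝ)..T,
        (deriv (ouOptimalPath κ E T γ₀ b) t + κ * ouOptimalPath κ E T γ₀ b t - E) ^ 2 =
      κ * (γ₀ - (b - E / κ) * exp (κ * T) - E / κ) ^ 2 / (exp (2 * κ * T) - 1) := by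
  simp_rw [ouOptimalPath_residual hκ]
  rw [integral_sq_const_mul_exp hκ, mul_zero, exp_zero]
  have hu : exp (2 * κ * T) = exp (κ * T) ^ 2 := by rw [sq, ← exp_add]; ring_nf
  have hu₁ : exp (κ * T) ^ 2 - 1 ≠ 0 := by
    rw [← hu, sub_ne_zero, Ne, exp_eq_one_iff]; positivity
  have hS : sinh (κ * T) = (exp (κ * T) ^ 2 - 1) / (2 * exp (κ * T)) := by
    rw [sinh_eq, exp_neg]; field_simp
  rw [hu, hS, exp_neg]
  field_simp
  ring

end OptimalPath

/-- For the OU process with constant field `E`, the trajectory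
`γ_t = (b - E/κ) sinh(κt)/sinh(κT) + (γ₀ - E/κ) sinh(κ(T-t))/sinh(κT) + E/κ`
joins `γ₀` to `b` in time `T`, minimizes the path cost among all C¹ trajectories with
these endpoints, and its cost `(1/2)∫₀ᵀ(γ̇ + κγ - E)² ds` equals
`κ(γ₀ - (b - E/κ)e^{κT} - E/κ)²/(e^{2κT} - 1)`. -/
theorem stmt13 (κ E T b γ₀ : ℝ) (hκ : 0 < κ) (hT : 0 < T)
    (γ : ℝ → ℝ)
    (hγ : ∀ t : ℝ, γ t =
      (b - E / κ) * Real.sinh (κ * t) / Real.sinh (κ * T) +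
      (γ₀ - E / κ) * Real.sinh (κ * (T - t)) / Real.sinh (κ * T) + E / κ) :
    γ 0 = γ₀ ∧ γ T = b ∧
    (1 / 2) * (∫ t in (0:ℝ)..T, (deriv γ t + κ * γ t - E) ^ 2) =
      κ * (γ₀ - (b - E / κ) * Real.exp (κ * T) - E / κ) ^ 2 /
        (Real.exp (2 * κ * T) - 1) ∧
    (∀ η : ℝ → ℝ, ContDiff ℝ 1 η → η 0 = γ₀ → η T = b →
      (1 / 2) * (∫ t in (0:ℝ)..T, (deriv γ t + κ * γ t - E) ^ 2) ≤
      (1 / 2) * (∫ t in (0:ℝ)..T, (deriv η t + κ * η t - E) ^ 2)) := by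
  obtain rfl : γ = ouOptimalPath κ E T γ₀ b := funext hγ
  have hS : sinh (κ * T) ≠ 0 := (sinh_pos_iff.2 (mul_pos hκ hT)).ne'
  refine ⟨ouOptimalPath_zero hS, ouOptimalPath_self hS, ouOptimalPath_cost hκ.ne' hT.ne',
    fun η hη h₀ h_T => ?_⟩
  gcongr 1 / 2 * ?_
  exact integral_residual_sq_le hT.le (fun t => (hasDerivAt_ouOptimalPath t).differentiableAt)
    (ouOptimalPath_residual hκ.ne') hη (h₀.trans (ouOptimalPath_zero hS).symm)
    (h_T.trans (ouOptimalPath_self hS).symm)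
end
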